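/- Every homogeneous ½-derivation of the planar Galilean conformal algebra W of degree (0̄,1̄,γ) is zero, for every γ ∈ ℤ. -/

import Mathlib

/-!
Evaluate `D ⁅x, y⁆ = ½ (⁅D x, y⁆ + ⁅x, D y⁆)` on pairs of basis vectors and compare coefficients.
`⁅H₀, Iₙ⁆ = Jₙ` kills `D` on the `J`'s, and then `⁅H₁, Iₘ⁆ = J₁₊ₘ` kills it on the `I`'s.
`⁅Hₘ, Hₙ⁆ = 0` makes the coefficient `c` of `D Hₘ` independent of `m`, and `⁅Lₘ, Hₙ⁆ = -n Hₘ₊ₙ`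
yields `-n c = ½ (-c_L(m) + (m - n - γ) c)`; the cases `n = 0, 1` give `c = 0`, and then `c_L = 0`.
-/

/-- Index type for the basis of the planar Galilean conformal algebra. -/
inductive PGIdx : Type
  | L (m : ℤ) | H (m : ℤ) | I (m : ℤ) | J (m : ℤ)

open PGIdx in
/-- `W` together with a basis `b` satisfying these relations is
the planar Galilean conformal algebra. -/
def IsPlanarGCA (W : Type*) [LieRing W] [LieAlgebra ℂ W]
    (b : Module.Basis PGIdx ℂ W) : Prop :=
  ∀ m n : ℤ,
    ⁅b (L m), b (L n)⁆ = ((m - n : ℤ) : ℂ) • b (L (m + n)) ∧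
    ⁅b (L m), b (H n)⁆ = (-(n : ℂ)) • b (H (m + n)) ∧
    ⁅b (L m), b (I n)⁆ = ((m - n : ℤ) : ℂ) • b (I (m + n)) ∧
    ⁅b (L m), b (J n)⁆ = ((m - n : ℤ) : ℂ) • b (J (m + n)) ∧
    ⁅b (H m), b (I n)⁆ = b (J (m + n)) ∧
    ⁅b (H m), b (J n)⁆ = -b (I (m + n)) ∧
    ⁅b (H m), b (H n)⁆ = 0 ∧
    ⁅b (I m), b (I n)⁆ = 0 ∧
    ⁅b (I m), b (J n)⁆ = 0 ∧
    ⁅b (J m), b (J n)⁆ = 0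

/-- `φ` is a ½-derivation. -/
def IsHalfDerivation {W : Type*} [LieRing W] [LieAlgebra ℂ W]
    (φ : W →ₗ[ℂ] W) : Prop :=
  ∀ x y : W, φ ⁅x, y⁆ = (2 : ℂ)⁻¹ • (⁅φ x, y⁆ + ⁅x, φ y⁆)

open PGIdx

theorem IsHalfDerivation.apply_lie_of_eq_smul {W : Type*} [LieRing W] [LieAlgebra ℂ W]
    {D : W →ₗ[ℂ] W} (hD : IsHalfDerivation D) {x y u v : W} {a c : ℂ}
    (hx : D x = a • u) (hy : D y = c • v) :
    D ⁅x, y⁆ = (2 : ℂ)⁻¹ • (a • ⁅u, y⁆ + c • ⁅x, v⁆) := by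
  rw [hD, hx, hy, smul_lie, lie_smul]

namespace IsPlanarGCA

variable {W : Type*} [LieRing W] [LieAlgebra ℂ W] {b : Module.Basis PGIdx ℂ W}

theorem lie_H_I (hW : IsPlanarGCA W b) (m n : ℤ) : ⁅b (H m), b (I n)⁆ = b (J (m + n)) :=
  (hW m n).2.2.2.2.1

theorem lie_H_J (hW : IsPlanarGCA W b) (m n : ℤ) : ⁅b (H m), b (J n)⁆ = -b (I (m + n)) :=
  (hW m n).2.2.2.2.2.1

theorem lie_H_H (hW : IsPlanarGCA W b) (m n : ℤ) : ⁅b (H m), b (H n)⁆ = 0 :=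
  (hW m n).2.2.2.2.2.2.1

theorem lie_I_J (hW : IsPlanarGCA W b) (m n : ℤ) : ⁅b (I m), b (J n)⁆ = 0 :=
  (hW m n).2.2.2.2.2.2.2.2.1

theorem lie_L_J (hW : IsPlanarGCA W b) (m n : ℤ) :
    ⁅b (L m), b (J n)⁆ = ((m - n : ℤ) : ℂ) • b (J (m + n)) :=
  (hW m n).2.2.2.1

theorem lie_L_H (hW : IsPlanarGCA W b) (m n : ℤ) :
    ⁅b (L m), b (H n)⁆ = (-(n : ℂ)) • b (H (m + n)) :=
  (hW m n).2.1

theorem lie_H_L (hW : IsPlanarGCA W b) (m n : ℤ) :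
    ⁅b (H m), b (L n)⁆ = (m : ℂ) • b (H (m + n)) := by
  rw [← lie_skew, hW.lie_L_H, add_comm, neg_smul, neg_neg]

theorem lie_I_H (hW : IsPlanarGCA W b) (m n : ℤ) : ⁅b (I m), b (H n)⁆ = -b (J (m + n)) := by
  rw [← lie_skew, hW.lie_H_I, add_comm]

theorem lie_J_H (hW : IsPlanarGCA W b) (m n : ℤ) : ⁅b (J m), b (H n)⁆ = b (I (m + n)) := by
  rw [← lie_skew, hW.lie_H_J, add_comm, neg_neg]

theorem lie_J_I (hW : IsPlanarGCA W b) (m n : ℤ) : ⁅b (J m), b (I n)⁆ = 0 := by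
  rw [← lie_skew, hW.lie_I_J, neg_zero]

end IsPlanarGCA

namespace IsHalfDerivation

variable {W : Type*} [LieRing W] [LieAlgebra ℂ W] {b : Module.Basis PGIdx ℂ W}
  {D : W →ₗ[ℂ] W} {γ : ℤ} {cL cH cI : ℤ → ℂ}

theorem map_J_eq_zero (hD : IsHalfDerivation D) (hW : IsPlanarGCA W b)
    (hH : ∀ m, D (b (H m)) = cH m • b (J (m + γ)))
    (hI : ∀ m, D (b (I m)) = cI m • b (L (m + γ))) (n : ℤ) :
    D (b (J n)) = 0 := by
  have h := hD.apply_lie_of_eq_smul (hH 0) (hI n)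
  simpa [hW.lie_H_I, hW.lie_J_I, hW.lie_H_L] using h

theorem coeff_I_eq_zero (hD : IsHalfDerivation D) (hW : IsPlanarGCA W b)
    (hH : ∀ m, D (b (H m)) = cH m • b (J (m + γ)))
    (hI : ∀ m, D (b (I m)) = cI m • b (L (m + γ))) (m : ℤ) :
    cI m = 0 := by
  have h := hD.apply_lie_of_eq_smul (hH 1) (hI m)
  simpa [hW.lie_H_I, hW.lie_J_I, hW.lie_H_L, hD.map_J_eq_zero hW hH hI, smul_eq_zero, b.ne_zero] using h.symm

theorem coeff_H_eq (hD : IsHalfDerivation D) (hW : IsPlanarGCA W b)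
    (hH : ∀ m, D (b (H m)) = cH m • b (J (m + γ))) (m n : ℤ) :
    cH m = cH n := by
  have h := hD.apply_lie_of_eq_smul (hH m) (hH n)
  rw [hW.lie_H_H, map_zero, hW.lie_J_H, hW.lie_H_J, add_right_comm m γ n, ← add_assoc m n γ,
    smul_neg, ← sub_eq_add_neg, ← sub_smul] at h
  simpa [sub_eq_zero, b.ne_zero] using h.symm

theorem coeff_L_H_relation (hD : IsHalfDerivation D) (hW : IsPlanarGCA W b)
    (hL : ∀ m, D (b (L m)) = cL m • b (I (m + γ)))
    (hH : ∀ m, D (b (H m)) = cH m • b (J (m + γ))) (m n : ℤ) :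
    -(n : ℂ) * cH (m + n) = 2⁻¹ * (-cL m + cH n * (m - n - γ)) := by
  have h := hD.apply_lie_of_eq_smul (hL m) (hH n)
  rw [hW.lie_L_H, map_smul, hH, hW.lie_I_H, hW.lie_L_J, add_right_comm m γ n,
    ← add_assoc m n γ] at h
  apply smul_left_injective ℂ (b.ne_zero (J (m + n + γ)))
  push_cast at h ⊢
  linear_combination (norm := module) h

theorem coeff_H_eq_zero (hD : IsHalfDerivation D) (hW : IsPlanarGCA W b)
    (hL : ∀ m, D (b (L m)) = cL m • b (I (m + γ)))
    (hH : ∀ m, D (b (H m)) = cH m • b (J (m + γ))) (m : ℤ) :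
    cH m = 0 := by
  have h₀ := hD.coeff_L_H_relation hW hL hH 0 0
  have h₁ := hD.coeff_L_H_relation hW hL hH 0 1
  rw [hD.coeff_H_eq hW hH (0 + 1) 0, hD.coeff_H_eq hW hH 1 0] at h₁
  rw [hD.coeff_H_eq hW hH m 0]
  push_cast at h₀ h₁
  linear_combination 2 * h₀ - 2 * h₁

theorem coeff_L_eq_zero (hD : IsHalfDerivation D) (hW : IsPlanarGCA W b)
    (hL : ∀ m, D (b (L m)) = cL m • b (I (m + γ)))
    (hH : ∀ m, D (b (H m)) = cH m • b (J (m + γ))) (m : ℤ) :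
    cL m = 0 := by
  have h := hD.coeff_L_H_relation hW hL hH m 0
  simp only [hD.coeff_H_eq_zero hW hL hH] at h
  push_cast at h
  linear_combination 2 * h

end IsHalfDerivation

open PGIdx in
theorem homogeneous_half_derivation_deg01_is_zero_general
    (W : Type*) [LieRing W] [LieAlgebra ℂ W]
    (b : Module.Basis PGIdx ℂ W) (hW : IsPlanarGCA W b)
    (γ : ℤ)
    (D : W →ₗ[ℂ] W) (hD : IsHalfDerivation D)
    (hL : ∀ m : ℤ, ∃ c : ℂ, D (b (L m)) = c • b (I (m + γ)))
    (hH : ∀ m : ℤ, ∃ c : ℂ, D (b (H m)) = c • b (J (m + γ)))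
    (hI : ∀ m : ℤ, ∃ c : ℂ, D (b (I m)) = c • b (L (m + γ))) :
    D = 0 := by
  choose cL hcL using hL
  choose cH hcH using hH
  choose cI hcI using hI
  refine b.ext fun i => ?_
  rw [LinearMap.zero_apply]
  cases i with
  | L m => rw [hcL, hD.coeff_L_eq_zero hW hcL hcH, zero_smul]
  | H m => rw [hcH, hD.coeff_H_eq_zero hW hcL hcH, zero_smul]
  | I m => rw [hcI, hD.coeff_I_eq_zero hW hcH hcI, zero_smul]
  | J m => exact hD.map_J_eq_zero hW hcH hcI m

open PGIdx in
theorem homogeneous_half_derivation_deg01_is_zero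
    (W : Type*) [LieRing W] [LieAlgebra ℂ W]
    (b : Module.Basis PGIdx ℂ W) (hW : IsPlanarGCA W b)
    (γ : ℤ)
    (D : W →ₗ[ℂ] W) (hD : IsHalfDerivation D)
    (hL : ∀ m : ℤ, ∃ c : ℂ, D (b (L m)) = c • b (I (m + γ)))
    (hH : ∀ m : ℤ, ∃ c : ℂ, D (b (H m)) = c • b (J (m + γ)))
    (hI : ∀ m : ℤ, ∃ c : ℂ, D (b (I m)) = c • b (L (m + γ)))
    (hJ : ∀ m : ℤ, ∃ c : ℂ, D (b (J m)) = c • b (H (m + γ))) :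
    D = 0 :=
  homogeneous_half_derivation_deg01_is_zero_general W b hW γ D hD hL hH hI
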